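/- Let q, l ≥ 0 be integers with l ≥ q. Then Σ_{n=1}^∞ h_n^{(q)} / (n·C(n+l, l)) = π²/6 − H_{l−q}^{(2)}, where H_{l−q}^{(2)} = Σ_{k=1}^{l−q} 1/k² (with H_0^{(2)} = 0). -/

import Mathlib

open Finset Real

/-- The generalized harmonic number `H_n^{(p)} = ∑_{k=1}^n 1/k^p`. -/
noncomputable def gH (p : ℤ) (n : ℕ) : ℝ := ∑ k ∈ Finset.Icc 1 n, ((k : ℝ) ^ p)⁻¹

/-- The generalized hyperharmonic number `H_n^{(p,q)}`:
`H_n^{(p,0)} = 1/n^p` (with `H_0^{(p,q)} = 0`) and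
`H_n^{(p,q)} = ∑_{k=1}^n H_k^{(p,q-1)}` for `q ≥ 1`. -/
noncomputable def gHH (p : ℤ) : ℕ → ℕ → ℝ
  | 0, n => if n = 0 then 0 else ((n : ℝ) ^ p)⁻¹
  | q + 1, n => ∑ k ∈ Finset.Icc 1 n, gHH p q k

/-- Euler sum of generalized harmonic numbers `ζ_{H^{(p)}}(r) = ∑_{n≥1} H_n^{(p)}/n^r`. -/
noncomputable def eulerSum (p r : ℤ) : ℝ := ∑' n : ℕ+, gH p n / (n : ℝ) ^ r

/-- Euler sum of generalized hyperharmonic numbers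
`ζ_{H^{(p,q)}}(r) = ∑_{n≥1} H_n^{(p,q)}/n^r`. -/
noncomputable def eulerSumHH (p : ℤ) (q : ℕ) (r : ℤ) : ℝ := ∑' n : ℕ+, gHH p q n / (n : ℝ) ^ r

/-- Riemann zeta value at an integer argument, `ζ(s) = ∑_{n≥1} 1/n^s`. -/
noncomputable def zv (s : ℤ) : ℝ := ∑' n : ℕ+, ((n : ℝ) ^ s)⁻¹

/-- Unsigned Stirling numbers of the first kind, defined by
`x(x+1)⋯(x+q-1) = ∑_{k=0}^q [q,k] x^k`, i.e. `[n+1,k] = [n,k-1] + n·[n,k]`. -/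
def stirlingFirst : ℕ → ℕ → ℕ
  | 0, 0 => 1
  | 0, _ + 1 => 0
  | _ + 1, 0 => 0
  | n + 1, k + 1 => stirlingFirst n k + n * stirlingFirst n (k + 1)

/-- The series `μ(r,j) = ∑_{n≥1} 1/(n^r (n+j))`. -/
noncomputable def mu (r j : ℕ) : ℝ := ∑' n : ℕ+, 1 / ((n : ℝ) ^ r * ((n : ℝ) + j))

/-- `e_j(n+1, n+2, …, n+q)`: the `j`-th elementary symmetric polynomial
evaluated at the numbers `n+1, …, n+q`. -/
noncomputable def esymmVal (n q j : ℕ) : ℝ :=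
  ∑ s ∈ Finset.powersetCard j (Finset.Icc 1 q), ∏ i ∈ s, ((n : ℝ) + i)

/-!
With `t_l(n) = 1/(n C(n+l,l))` one has `t_{l+1}(n) = t_l(n) - t_l(n+1)`, so
`∑_{n ≥ k} t_{l+1}(n) = t_l(k)` for `k ≥ 1`. Exchanging the order of summation in
`h_n^{(q+1)} = ∑_{k ≤ n} h_k^{(q)}` therefore turns the series for `(q+1, l+1)` into the one for
`(q, l)`, which reduces everything to `q = 0`. There
`t_{l+1}(n)/n = t_l(n)/n - t_{l+1}(n)/(l+1)` and `∑_n t_{l+1}(n) = t_l(1) = 1/(l+1)`, so each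
step from `l` to `l + 1` subtracts `1/(l+1)^2` from `ζ(2) = π²/6`.
-/

open Filter Topology
open scoped Nat

lemma hasSum_sub_succ_of_antitone {f : ℕ → ℝ} {a : ℝ} (hf : Antitone f)
    (hlim : Tendsto f atTop (𝓝 a)) : HasSum (fun n => f n - f (n + 1)) (f 0 - a) := by
  rw [hasSum_iff_tendsto_nat_of_nonneg fun n => sub_nonneg.2 (hf n.le_succ)]
  simp_rw [sum_range_sub']
  exact tendsto_const_nhds.sub hlim

lemma hasSum_sum_Icc_mul_of_nonneg {f g G : ℕ → ℝ} {s : ℝ} (hf : ∀ k, 0 ≤ f k)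
    (hg : ∀ n, 0 ≤ g n) (hf₀ : f 0 = 0) (hG : ∀ k ≠ 0, HasSum (fun j => g (j + k)) (G k))
    (hs : HasSum (fun k => f k * G k) s) :
    HasSum (fun n => (∑ k ∈ Icc 1 n, f k) * g n) s := by
  set F : ℕ × ℕ → ℝ := fun p => if p.2 ∈ Icc 1 p.1 then f p.2 * g p.1 else 0
  have hF : 0 ≤ F := fun p => by
    dsimp only [F]
    split_ifs
    exacts [mul_nonneg (hf _) (hg _), le_rfl]
  have hrow (n : ℕ) : HasSum (fun k => F (n, k)) ((∑ k ∈ Icc 1 n, f k) * g n) := by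
    rw [sum_mul, ← sum_congr rfl fun k hk => if_pos hk]
    exact hasSum_sum_of_ne_finset_zero fun k hk => if_neg hk
  have hcol (k : ℕ) : HasSum (fun n => F (n, k)) (f k * G k) := by
    rcases eq_or_ne k 0 with rfl | hk
    · simp [F, hf₀, hasSum_zero]
    rw [← hasSum_nat_add_iff' k]
    have hhead : ∑ i ∈ range k, F (i, k) = 0 :=
      sum_eq_zero fun i hi => if_neg fun h => by
        have := (mem_Icc.1 h).2
        have := mem_range.1 hi
        omega
    have hshift (j : ℕ) : F (j + k, k) = f k * g (j + k) :=
      if_pos (mem_Icc.2 ⟨by omega, by omega⟩)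
    simpa [hhead, hshift] using (hG k hk).mul_left (f k)
  have hFswap : Summable (fun p : ℕ × ℕ => F p.swap) :=
    (summable_prod_of_nonneg (f := fun p => F p.swap) fun p => hF p.swap).2
      ⟨fun k => (hcol k).summable, hs.summable.congr fun k => (hcol k).tsum_eq.symm⟩
  have hFsum : HasSum F s := by
    have h : HasSum F (∑' p, F p) :=
      ((Equiv.prodComm ℕ ℕ).summable_iff (f := F)).1 hFswap |>.hasSum
    have hswap : HasSum (fun p : ℕ × ℕ => F p.swap) (∑' p, F p) :=
      (Equiv.prodComm ℕ ℕ).hasSum_iff (f := F) |>.2 h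
    rwa [(hswap.prod_fiberwise hcol).unique hs] at h
  exact hFsum.prod_fiberwise hrow

noncomputable def invChooseTerm (l n : ℕ) : ℝ := ((n : ℝ) * ((n + l).choose l : ℕ))⁻¹

lemma invChooseTerm_zero_right (l : ℕ) : invChooseTerm l 0 = 0 := by simp [invChooseTerm]

lemma invChooseTerm_zero_left (n : ℕ) : invChooseTerm 0 n = (n : ℝ)⁻¹ := by
  simp [invChooseTerm]

lemma invChooseTerm_nonneg (l n : ℕ) : 0 ≤ invChooseTerm l n := by
  unfold invChooseTerm; positivity

lemma invChooseTerm_le_inv (l n : ℕ) : invChooseTerm l n ≤ (n : ℝ)⁻¹ := by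
  rcases n.eq_zero_or_pos with rfl | hn
  · simp [invChooseTerm]
  have hchoose : (1 : ℝ) ≤ ((n + l).choose l : ℕ) := by
    exact_mod_cast Nat.choose_pos (by omega)
  exact inv_anti₀ (by positivity) (le_mul_of_one_le_right (by positivity) hchoose)

lemma tendsto_invChooseTerm (l : ℕ) : Tendsto (invChooseTerm l) atTop (𝓝 0) :=
  squeeze_zero (invChooseTerm_nonneg l) (invChooseTerm_le_inv l) tendsto_inv_atTop_nhds_zero_nat

lemma invChooseTerm_succ (l m : ℕ) :
    invChooseTerm l (m + 1) = (l ! * m ! : ℝ) / (m + l + 1)! := by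
  rw [invChooseTerm, Nat.cast_choose ℝ (by omega), show m + 1 + l - l = m + 1 by omega,
    show m + 1 + l = m + l + 1 by omega, Nat.factorial_succ m]
  push_cast
  field_simp

lemma invChooseTerm_one_right (l : ℕ) : invChooseTerm l 1 = ((l : ℝ) + 1)⁻¹ := by
  rw [invChooseTerm_succ, zero_add, Nat.factorial_succ, Nat.factorial_zero]
  push_cast
  field_simp

lemma invChooseTerm_succ_left {l n : ℕ} (hn : n ≠ 0) :
    invChooseTerm (l + 1) n = invChooseTerm l n - invChooseTerm l (n + 1) := by
  obtain ⟨m, rfl⟩ := Nat.exists_eq_succ_of_ne_zero hn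
  rw [invChooseTerm_succ, invChooseTerm_succ, invChooseTerm_succ,
    show m + 1 + l + 1 = m + (l + 1) + 1 by omega, Nat.factorial_succ (m + (l + 1)),
    show m + (l + 1) = m + l + 1 by omega, Nat.factorial_succ m, Nat.factorial_succ l]
  push_cast
  field_simp
  ring

lemma inv_mul_invChooseTerm_succ_left (l n : ℕ) :
    (n : ℝ)⁻¹ * invChooseTerm (l + 1) n
      = (n : ℝ)⁻¹ * invChooseTerm l n - ((l : ℝ) + 1)⁻¹ * invChooseTerm (l + 1) n := by
  rcases n with _ | m
  · simp [invChooseTerm_zero_right]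
  rw [invChooseTerm_succ, invChooseTerm_succ, show m + (l + 1) + 1 = m + l + 1 + 1 by omega,
    Nat.factorial_succ (m + l + 1), Nat.factorial_succ l]
  push_cast
  field_simp
  ring

lemma hasSum_invChooseTerm_add (l : ℕ) {k : ℕ} (hk : k ≠ 0) :
    HasSum (fun j => invChooseTerm (l + 1) (j + k)) (invChooseTerm l k) := by
  have hstep (j : ℕ) : invChooseTerm (l + 1) (j + k)
      = invChooseTerm l (j + k) - invChooseTerm l (j + 1 + k) := by
    rw [invChooseTerm_succ_left (by omega), add_right_comm]
  have hanti : Antitone fun j => invChooseTerm l (j + k) :=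
    antitone_nat_of_succ_le fun j => sub_nonneg.1 <| hstep j ▸ invChooseTerm_nonneg _ _
  simpa [← hstep] using hasSum_sub_succ_of_antitone hanti
    ((tendsto_invChooseTerm l).comp (tendsto_add_atTop_nat k))

lemma hasSum_invChooseTerm (l : ℕ) : HasSum (invChooseTerm (l + 1)) ((l : ℝ) + 1)⁻¹ := by
  rw [← hasSum_nat_add_iff' 1]
  simpa [invChooseTerm_zero_right, invChooseTerm_one_right] using
    hasSum_invChooseTerm_add l one_ne_zero

lemma gH_succ (p : ℤ) (l : ℕ) : gH p (l + 1) = gH p l + (((l : ℝ) + 1) ^ p)⁻¹ := by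
  rw [gH, sum_Icc_succ_top (by omega), ← gH]
  push_cast
  rfl

lemma gHH_apply_zero (p : ℤ) (q : ℕ) : gHH p q 0 = 0 := by
  cases q <;> simp [gHH]

lemma gHH_one_zero (n : ℕ) : gHH 1 0 n = (n : ℝ)⁻¹ := by
  rcases eq_or_ne n 0 with rfl | hn <;> simp [gHH, *]

lemma gHH_nonneg (p : ℤ) (q n : ℕ) : 0 ≤ gHH p q n := by
  induction q generalizing n with
  | zero => unfold gHH; split_ifs <;> positivity
  | succ q ih => exact sum_nonneg fun k _ => ih k

lemma hasSum_inv_mul_invChooseTerm (l : ℕ) :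
    HasSum (fun n : ℕ => (n : ℝ)⁻¹ * invChooseTerm l n) (π ^ 2 / 6 - gH 2 l) := by
  induction l with
  | zero => simpa [invChooseTerm_zero_left, gH, ← mul_inv, ← sq] using hasSum_zeta_two
  | succ l ih =>
    have h := ih.sub ((hasSum_invChooseTerm l).mul_left ((l : ℝ) + 1)⁻¹)
    simp_rw [← inv_mul_invChooseTerm_succ_left] at h
    rwa [gH_succ, zpow_two, mul_inv, ← sub_sub]

theorem hasSum_gHH_mul_invChooseTerm {q l : ℕ} (hql : q ≤ l) :
    HasSum (fun n => gHH 1 q n * invChooseTerm l n) (π ^ 2 / 6 - gH 2 (l - q)) := by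
  induction q generalizing l with
  | zero => simpa [gHH_one_zero] using hasSum_inv_mul_invChooseTerm l
  | succ q ih =>
    obtain ⟨l, rfl⟩ := Nat.exists_eq_add_of_le' (show 1 ≤ l by omega)
    rw [Nat.add_sub_add_right]
    exact hasSum_sum_Icc_mul_of_nonneg (gHH_nonneg 1 q) (invChooseTerm_nonneg (l + 1))
      (gHH_apply_zero 1 q) (fun k hk => hasSum_invChooseTerm_add l hk) (ih (by omega))

/-- `∑_{n≥1} h_n^{(q)}/(n C(n+l,l)) = π²/6 - H_{l-q}^{(2)}` for `l ≥ q`. -/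
theorem stmt_9 (q l : ℕ) (hlq : q ≤ l) :
    ∑' n : ℕ+, gHH 1 q n / ((n : ℝ) * ((((n : ℕ) + l).choose l : ℕ) : ℝ))
      = Real.pi ^ 2 / 6 - gH 2 (l - q) := by
  have h := (hasSum_nat_add_iff' 1).2 (hasSum_gHH_mul_invChooseTerm hlq)
  simp only [range_one, sum_singleton, gHH_apply_zero, zero_mul, sub_zero] at h
  rw [tsum_pnat_eq_tsum_succ (f := fun n => gHH 1 q n / ((n : ℝ) * ((n + l).choose l : ℕ)))]
  exact h.tsum_eq
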